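/- arXiv:2310.00286 — 6 statements merged into one kernel-verified Lean document; each statement's English description precedes it below -/
import Mathlib

section
/- Fix an integer N ≥ 2, masses m₁,…,m_{N−1} > 0, points a₁,…,a_N in ℝ² with aᵢ ≠ a_N for all 1 ≤ i ≤ N−1, and a real number μ > 0. Assume the Euler–Moulton setting: the second coordinate of aᵢ is 0 for all 1 ≤ i ≤ N−1, the second coordinate of a_N is nonzero, and the central configuration equation ∑_{j=1}^{N−1} mⱼ (aⱼ − a_N)/|aⱼ − a_N|³ = −μ·a_N holds. Define D = I₂ − (1/μ)(∑_{i=1}^{N−1} mᵢ/|aᵢ − a_N|³)·I₂ + (3/μ)·∑_{i=1}^{N−1} mᵢ (aᵢ − a_N)(aᵢ − a_N)ᵀ/|aᵢ − a_N|⁵. Then D is a symmetric matrix with trace(D) = 3 and det(D) ≥ 0; consequently the two eigenvalues λ₃, λ₄ of D are real, satisfy λ₃ ≥ 0, λ₄ ≥ 0, and λ₃ + λ₄ = 3. -/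
/-!
The second component of the central configuration equation, in which every `aᵢ - a_N` has the
same entry `-(a_N)₂ ≠ 0`, says `∑ mᵢ / |aᵢ - a_N|³ = μ`. Hence the identity part of `D` cancels
and `D = (3/μ) ∑ mᵢ / |aᵢ - a_N|⁵ (aᵢ - a_N)(aᵢ - a_N)ᵀ` is positive semidefinite, with trace
`(3/μ) ∑ mᵢ / |aᵢ - a_N|³ = 3`. A positive semidefinite matrix is symmetric, has nonnegative
determinant, and its characteristic polynomial splits over its nonnegative eigenvalues, whose
sum is the trace.
-/

/-- The outer product `v vᵀ` of a vector `v ∈ ℝ²` with itself, as a 2×2 matrix. -/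
noncomputable def outer (v : EuclideanSpace ℝ (Fin 2)) : Matrix (Fin 2) (Fin 2) ℝ :=
  Matrix.of fun p q => v p * v q

open Matrix Polynomial

lemma outer_eq_vecMulVec (v : EuclideanSpace ℝ (Fin 2)) : outer v = vecMulVec ⇑v (star ⇑v) := by
  ext p q
  simp [outer, vecMulVec_apply]

lemma posSemidef_outer (v : EuclideanSpace ℝ (Fin 2)) : (outer v).PosSemidef := by
  rw [outer_eq_vecMulVec]
  exact posSemidef_vecMulVec_self_star _

lemma trace_outer (v : EuclideanSpace ℝ (Fin 2)) : (outer v).trace = ‖v‖ ^ 2 := by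
  rw [EuclideanSpace.norm_eq, Real.sq_sqrt (by positivity)]
  simp [outer, trace, Fin.sum_univ_two, sq]

lemma trace_sum_div_pow_five_smul_outer {ι : Type*} [Fintype ι] (c : ι → ℝ)
    (v : ι → EuclideanSpace ℝ (Fin 2)) :
    (∑ i, (c i / ‖v i‖ ^ 5) • outer (v i)).trace = ∑ i, c i / ‖v i‖ ^ 3 := by
  simp only [trace_sum, trace_smul, trace_outer, smul_eq_mul]
  refine Finset.sum_congr rfl fun i _ => ?_
  rcases eq_or_ne ‖v i‖ 0 with h | h
  · simp [h]
  · field_simp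

lemma sum_coeff_eq_of_collinear_off_line {ι : Type*} [Fintype ι] (c : ι → ℝ)
    (a : ι → EuclideanSpace ℝ (Fin 2)) (aN : EuclideanSpace ℝ (Fin 2)) (μ : ℝ)
    (hline : ∀ i, a i 1 = 0) (hoff : aN 1 ≠ 0)
    (hcc : ∑ j, c j • (a j - aN) = -μ • aN) :
    ∑ j, c j = μ := by
  have h := congrArg (fun v : EuclideanSpace ℝ (Fin 2) => v 1) hcc
  simp only [WithLp.ofLp_sum, Finset.sum_apply, PiLp.smul_apply, PiLp.sub_apply, hline,
    smul_eq_mul, zero_sub, mul_neg, Finset.sum_neg_distrib, neg_mul, neg_inj] at h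
  rw [← Finset.sum_mul] at h
  exact mul_right_cancel₀ hoff h

lemma Matrix.PosSemidef.exists_charpoly_eq_mul_of_fin_two {A : Matrix (Fin 2) (Fin 2) ℝ}
    (hA : A.PosSemidef) :
    ∃ l₁ l₂ : ℝ, A.charpoly = (X - C l₁) * (X - C l₂) ∧ 0 ≤ l₁ ∧ 0 ≤ l₂ ∧ l₁ + l₂ = A.trace := by
  refine ⟨hA.1.eigenvalues 0, hA.1.eigenvalues 1, ?_, hA.eigenvalues_nonneg 0,
    hA.eigenvalues_nonneg 1, ?_⟩
  · simpa [Fin.prod_univ_two] using hA.1.charpoly_eq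
  · simpa [Fin.sum_univ_two] using hA.1.trace_eq_sum_eigenvalues.symm

theorem statement5_general (N : ℕ)
    (m : Fin (N - 1) → ℝ) (hm : ∀ i, 0 < m i)
    (a : Fin (N - 1) → EuclideanSpace ℝ (Fin 2)) (aN : EuclideanSpace ℝ (Fin 2))
    (μ : ℝ) (hμ : 0 < μ)
    (hline : ∀ i, a i 1 = 0) (hoff : aN 1 ≠ 0)
    (hcc : ∑ j, (m j / ‖a j - aN‖ ^ 3) • (a j - aN) = -μ • aN)
    (D : Matrix (Fin 2) (Fin 2) ℝ)
    (hD : D = 1 - ((1 / μ) * ∑ i, m i / ‖a i - aN‖ ^ 3) • (1 : Matrix (Fin 2) (Fin 2) ℝ)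
        + (3 / μ) • ∑ i, (m i / ‖a i - aN‖ ^ 5) • outer (a i - aN)) :
    D.IsSymm ∧ D.trace = 3 ∧ 0 ≤ D.det ∧
      ∃ lam3 lam4 : ℝ,
        D.charpoly = (Polynomial.X - Polynomial.C lam3) * (Polynomial.X - Polynomial.C lam4) ∧
        0 ≤ lam3 ∧ 0 ≤ lam4 ∧ lam3 + lam4 = 3 := by
  have hS : ∑ i, m i / ‖a i - aN‖ ^ 3 = μ :=
    sum_coeff_eq_of_collinear_off_line _ a aN μ hline hoff hcc
  have hD' : D = (3 / μ) • ∑ i, (m i / ‖a i - aN‖ ^ 5) • outer (a i - aN) := by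
    rw [hD, hS, one_div_mul_cancel hμ.ne', one_smul, sub_self, zero_add]
  have hpsd : D.PosSemidef := by
    rw [hD']
    refine PosSemidef.smul (posSemidef_sum _ fun i _ => ?_) (by positivity)
    exact (posSemidef_outer _).smul (div_nonneg (hm i).le (by positivity))
  have htrace : D.trace = 3 := by
    rw [hD', trace_smul, trace_sum_div_pow_five_smul_outer, hS, smul_eq_mul,
      div_mul_cancel₀ _ hμ.ne']
  refine ⟨isHermitian_iff_isSymm.mp hpsd.1, htrace, hpsd.det_nonneg, ?_⟩
  simpa only [htrace] using hpsd.exists_charpoly_eq_mul_of_fin_two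

/-- in the Euler–Moulton setting, the central-configuration matrix `D` is
symmetric, has trace 3 and nonnegative determinant; consequently its two eigenvalues
`λ₃, λ₄` are real, nonnegative and satisfy `λ₃ + λ₄ = 3`. -/
theorem statement5 (N : ℕ) (hN : 2 ≤ N)
    (m : Fin (N - 1) → ℝ) (hm : ∀ i, 0 < m i)
    (a : Fin (N - 1) → EuclideanSpace ℝ (Fin 2)) (aN : EuclideanSpace ℝ (Fin 2))
    (ha : ∀ i, a i ≠ aN)
    (μ : ℝ) (hμ : 0 < μ)
    (hline : ∀ i, a i 1 = 0) (hoff : aN 1 ≠ 0)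
    (hcc : ∑ j, (m j / ‖a j - aN‖ ^ 3) • (a j - aN) = -μ • aN)
    (D : Matrix (Fin 2) (Fin 2) ℝ)
    (hD : D = 1 - ((1 / μ) * ∑ i, m i / ‖a i - aN‖ ^ 3) • (1 : Matrix (Fin 2) (Fin 2) ℝ)
        + (3 / μ) • ∑ i, (m i / ‖a i - aN‖ ^ 5) • outer (a i - aN)) :
    D.IsSymm ∧ D.trace = 3 ∧ 0 ≤ D.det ∧
      ∃ lam3 lam4 : ℝ,
        D.charpoly = (Polynomial.X - Polynomial.C lam3) * (Polynomial.X - Polynomial.C lam4) ∧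
        0 ≤ lam3 ∧ 0 ≤ lam4 ∧ lam3 + lam4 = 3 :=
  statement5_general N m hm a aN μ hμ hline hoff hcc D hD
end

section
/- Fix an integer N ≥ 2, masses m₁,…,m_{N−1} > 0, points a₁,…,a_N in ℝ² with aᵢ ≠ a_N for all 1 ≤ i ≤ N−1, and a real number μ > 0. Assume the Euler–Moulton setting: the second coordinate of aᵢ is 0 for all 1 ≤ i ≤ N−1, the second coordinate of a_N is nonzero, and the central configuration equation ∑_{j=1}^{N−1} mⱼ (aⱼ − a_N)/|aⱼ − a_N|³ = −μ·a_N holds. Define D = I₂ − (1/μ)(∑_{i=1}^{N−1} mᵢ/|aᵢ − a_N|³)·I₂ + (3/μ)·∑_{i=1}^{N−1} mᵢ (aᵢ − a_N)(aᵢ − a_N)ᵀ/|aᵢ − a_N|⁵. Then D = (3/μ)·∑_{j=1}^{N−1} mⱼ (aⱼ − a_N)(aⱼ − a_N)ᵀ/|aⱼ − a_N|⁵, and writing (x_{Nj}, y_{Nj}) = a_N − aⱼ and r_{Nj} = |a_N − aⱼ|, one has the Cauchy–Schwarz inequality (∑_{j=1}^{N−1} mⱼ x_{Nj} y_{Nj}/r_{Nj}⁵)²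 ≤ (∑_{j=1}^{N−1} mⱼ x_{Nj}²/r_{Nj}⁵)·(∑_{j=1}^{N−1} mⱼ y_{Nj}²/r_{Nj}⁵), hence det(D) ≥ 0. -/
open Finset

theorem Finset.sq_sum_mul_mul_le_sum_mul_sq_mul_sum_mul_sq {ι R : Type*} [CommRing R]
    [LinearOrder R] [IsStrictOrderedRing R] (s : Finset ι) {w : ι → R} (hw : ∀ i ∈ s, 0 ≤ w i) (x y : ι → R) :
    (∑ i ∈ s, w i * x i * y i) ^ 2 ≤ (∑ i ∈ s, w i * x i ^ 2) * ∑ i ∈ s, w i * y i ^ 2 :=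
  sum_sq_le_sum_mul_sum_of_sq_le_mul s (fun i hi => mul_nonneg (hw i hi) (sq_nonneg _))
    (fun i hi => mul_nonneg (hw i hi) (sq_nonneg _)) fun _ _ => le_of_eq (by ring)

section Outer

variable {ι : Type*} (s : Finset ι) (w : ι → ℝ) (v : ι → EuclideanSpace ℝ (Fin 2))

theorem sum_smul_outer_apply (p q : Fin 2) :
    (∑ i ∈ s, w i • outer (v i)) p q = ∑ i ∈ s, w i * v i p * v i q := by
  simp only [Matrix.sum_apply, Matrix.smul_apply, outer, Matrix.of_apply, smul_eq_mul, mul_assoc]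

theorem det_sum_smul_outer_nonneg (hw : ∀ i ∈ s, 0 ≤ w i) :
    0 ≤ (∑ i ∈ s, w i • outer (v i)).det := by
  have hsymm : ∑ i ∈ s, w i * v i 1 * v i 0 = ∑ i ∈ s, w i * v i 0 * v i 1 :=
    sum_congr rfl fun i _ => mul_right_comm _ _ _
  have hCS := s.sq_sum_mul_mul_le_sum_mul_sq_mul_sum_mul_sq hw (v · 0) (v · 1)
  simp only [sq, ← mul_assoc] at hCS
  rw [Matrix.det_fin_two]
  simp only [sum_smul_outer_apply, hsymm]
  linarith

end Outer

theorem sum_eq_of_sum_smul_sub_eq_neg_smul {ι n : Type*} (s : Finset ι) (c : ι → ℝ)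
    (a : ι → EuclideanSpace ℝ n) (b : EuclideanSpace ℝ n) (μ : ℝ) (k : n)
    (hline : ∀ i, a i k = 0) (hoff : b k ≠ 0)
    (h : ∑ i ∈ s, c i • (a i - b) = -μ • b) : ∑ i ∈ s, c i = μ := by
  have hk := congrArg (· k) h
  simp only [WithLp.ofLp_sum, Finset.sum_apply, PiLp.smul_apply, PiLp.sub_apply, hline,
    smul_eq_mul, zero_sub, mul_neg, sum_neg_distrib, neg_mul, neg_inj, ← sum_mul] at hk
  exact mul_right_cancel₀ hoff hk

theorem statement6_general (N : ℕ)
    (m : Fin (N - 1) → ℝ) (hm : ∀ i, 0 < m i)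
    (a : Fin (N - 1) → EuclideanSpace ℝ (Fin 2)) (aN : EuclideanSpace ℝ (Fin 2))
    (μ : ℝ) (hμ : 0 < μ)
    (hline : ∀ i, a i 1 = 0) (hoff : aN 1 ≠ 0)
    (hcc : ∑ j, (m j / ‖a j - aN‖ ^ 3) • (a j - aN) = -μ • aN)
    (D : Matrix (Fin 2) (Fin 2) ℝ)
    (hD : D = 1 - ((1 / μ) * ∑ i, m i / ‖a i - aN‖ ^ 3) • (1 : Matrix (Fin 2) (Fin 2) ℝ)
        + (3 / μ) • ∑ i, (m i / ‖a i - aN‖ ^ 5) • outer (a i - aN)) :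
    D = (3 / μ) • ∑ j, (m j / ‖a j - aN‖ ^ 5) • outer (a j - aN) ∧
      (∑ j, m j * (aN - a j) 0 * (aN - a j) 1 / ‖aN - a j‖ ^ 5) ^ 2 ≤
        (∑ j, m j * (aN - a j) 0 ^ 2 / ‖aN - a j‖ ^ 5) *
          (∑ j, m j * (aN - a j) 1 ^ 2 / ‖aN - a j‖ ^ 5) ∧
      0 ≤ D.det := by
  have hweight (j : Fin (N - 1)) (v : EuclideanSpace ℝ (Fin 2)) : 0 ≤ m j / ‖v‖ ^ 5 :=
    div_nonneg (hm j).le (by positivity)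
  have hsum : ∑ j, m j / ‖a j - aN‖ ^ 3 = μ :=
    sum_eq_of_sum_smul_sub_eq_neg_smul _ _ a aN μ 1 hline hoff hcc
  have hD' : D = (3 / μ) • ∑ j, (m j / ‖a j - aN‖ ^ 5) • outer (a j - aN) := by
    rw [hD, hsum, one_div, inv_mul_cancel₀ hμ.ne', one_smul, sub_self, zero_add]
  refine ⟨hD', ?_, ?_⟩
  · simp_rw [mul_div_right_comm]
    exact univ.sq_sum_mul_mul_le_sum_mul_sq_mul_sum_mul_sq (fun j _ => hweight j _) _ _
  · rw [hD', Matrix.det_smul]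
    exact mul_nonneg (by positivity) (det_sum_smul_outer_nonneg _ _ _ fun j _ => hweight j _)

/-- in the Euler–Moulton setting, the central-configuration matrix satisfies
`D = (3/μ)·∑ mⱼ (aⱼ − a_N)(aⱼ − a_N)ᵀ/|aⱼ − a_N|⁵`, the Cauchy–Schwarz inequality
`(∑ mⱼ x_{Nj} y_{Nj}/r_{Nj}⁵)² ≤ (∑ mⱼ x_{Nj}²/r_{Nj}⁵)(∑ mⱼ y_{Nj}²/r_{Nj}⁵)` holds for
`(x_{Nj}, y_{Nj}) = a_N − aⱼ` and `r_{Nj} = |a_N − aⱼ|`, and hence `det D ≥ 0`. -/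
theorem statement6 (N : ℕ) (hN : 2 ≤ N)
    (m : Fin (N - 1) → ℝ) (hm : ∀ i, 0 < m i)
    (a : Fin (N - 1) → EuclideanSpace ℝ (Fin 2)) (aN : EuclideanSpace ℝ (Fin 2))
    (ha : ∀ i, a i ≠ aN)
    (μ : ℝ) (hμ : 0 < μ)
    (hline : ∀ i, a i 1 = 0) (hoff : aN 1 ≠ 0)
    (hcc : ∑ j, (m j / ‖a j - aN‖ ^ 3) • (a j - aN) = -μ • aN)
    (D : Matrix (Fin 2) (Fin 2) ℝ)
    (hD : D = 1 - ((1 / μ) * ∑ i, m i / ‖a i - aN‖ ^ 3) • (1 : Matrix (Fin 2) (Fin 2) ℝ)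
        + (3 / μ) • ∑ i, (m i / ‖a i - aN‖ ^ 5) • outer (a i - aN)) :
    D = (3 / μ) • ∑ j, (m j / ‖a j - aN‖ ^ 5) • outer (a j - aN) ∧
      (∑ j, m j * (aN - a j) 0 * (aN - a j) 1 / ‖aN - a j‖ ^ 5) ^ 2 ≤
        (∑ j, m j * (aN - a j) 0 ^ 2 / ‖aN - a j‖ ^ 5) *
          (∑ j, m j * (aN - a j) 1 ^ 2 / ‖aN - a j‖ ^ 5) ∧
      0 ≤ D.det :=
  statement6_general N m hm a aN μ hμ hline hoff hcc D hD
end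

section
/- Let m₂ ∈ [0, 1] and let y > 0 satisfy the mass-constraint equation (1 − m₂)/(y² + 1)^{3/2} + m₂/y³ = (1 + 7m₂)/8. Then 1 ≤ y ≤ √3. -/
/-!
Write the right-hand side as `(1 - m₂)/8 + m₂`, so the constraint says that a convex combination
(weights `1 - m₂`, `m₂`) of `1/8 - 1/(y² + 1)^{3/2}` and `1 - 1/y³` vanishes. Both differences are
decreasing in `y`, the first vanishing at `y = √3` and the second at `y = 1`. For `y > √3` both are
negative and for `y < 1` both are positive, and a convex combination of two numbers of one strict
sign has that sign.
-/

open Real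

lemma four_rpow_three_halves : (4 : ℝ) ^ ((3 : ℝ) / 2) = 8 := by
  rw [show (4 : ℝ) = 2 ^ (2 : ℝ) by norm_num, ← rpow_mul (by norm_num)]
  norm_num

lemma convex_combination_pos {m a b : ℝ} (hm : m ∈ Set.Icc (0 : ℝ) 1) (ha : 0 < a) (hb : 0 < b) :
    0 < (1 - m) * a + m * b := by
  simpa only [smul_eq_mul, Set.mem_Ioi] using
    convex_Ioi (0 : ℝ) ha hb (sub_nonneg.2 hm.2) hm.1 (by ring)

lemma mass_constraint_lt_of_sqrt_three_lt {m y : ℝ} (hm : m ∈ Set.Icc (0 : ℝ) 1)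
    (hy : √3 < y) :
    (1 - m) / (y ^ 2 + 1) ^ ((3 : ℝ) / 2) + m / y ^ 3 < (1 + 7 * m) / 8 := by
  have hy0 : 0 < y := (sqrt_nonneg 3).trans_lt hy
  have hy1 : 1 < y := lt_of_le_of_lt (by rw [le_sqrt zero_le_one] <;> norm_num) hy
  have hA : 8 < (y ^ 2 + 1) ^ ((3 : ℝ) / 2) := by
    rw [← four_rpow_three_halves]
    have : 3 < y ^ 2 := (sqrt_lt' hy0).1 hy
    exact rpow_lt_rpow (by norm_num) (by linarith) (by norm_num)
  have h₁ : 0 < 1 / 8 - 1 / (y ^ 2 + 1) ^ ((3 : ℝ) / 2) :=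
    sub_pos.2 (one_div_lt_one_div_of_lt (by norm_num) hA)
  have h₂ : 0 < 1 - 1 / y ^ 3 :=
    sub_pos.2 ((div_lt_one (by positivity)).2 (one_lt_pow₀ hy1 (by norm_num)))
  have := convex_combination_pos hm h₁ h₂
  linarith [show (1 + 7 * m) / 8 - ((1 - m) / (y ^ 2 + 1) ^ ((3 : ℝ) / 2) + m / y ^ 3)
    = (1 - m) * (1 / 8 - 1 / (y ^ 2 + 1) ^ ((3 : ℝ) / 2)) + m * (1 - 1 / y ^ 3) by ring]

lemma lt_mass_constraint_of_lt_one {m y : ℝ} (hm : m ∈ Set.Icc (0 : ℝ) 1)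
    (hy0 : 0 < y) (hy1 : y < 1) :
    (1 + 7 * m) / 8 < (1 - m) / (y ^ 2 + 1) ^ ((3 : ℝ) / 2) + m / y ^ 3 := by
  have hA : (y ^ 2 + 1) ^ ((3 : ℝ) / 2) < 8 := by
    rw [← four_rpow_three_halves]
    have : y ^ 2 < 1 := pow_lt_one₀ hy0.le hy1 (by norm_num)
    exact rpow_lt_rpow (by positivity) (by linarith) (by norm_num)
  have h₁ : 0 < 1 / (y ^ 2 + 1) ^ ((3 : ℝ) / 2) - 1 / 8 :=
    sub_pos.2 (one_div_lt_one_div_of_lt (by positivity) hA)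
  have h₂ : 0 < 1 / y ^ 3 - 1 :=
    sub_pos.2 ((one_lt_div (by positivity)).2 (pow_lt_one₀ hy0.le hy1 (by norm_num)))
  have := convex_combination_pos hm h₁ h₂
  linarith [show (1 - m) / (y ^ 2 + 1) ^ ((3 : ℝ) / 2) + m / y ^ 3 - (1 + 7 * m) / 8
    = (1 - m) * (1 / (y ^ 2 + 1) ^ ((3 : ℝ) / 2) - 1 / 8) + m * (1 / y ^ 3 - 1) by ring]

/-- for `m₂ ∈ [0,1]`, any `y > 0` satisfying the mass-constraint equation
`(1 − m₂)/(y² + 1)^{3/2} + m₂/y³ = (1 + 7m₂)/8` satisfies `1 ≤ y ≤ √3`. -/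
theorem statement9 (m₂ : ℝ) (hm : m₂ ∈ Set.Icc (0 : ℝ) 1) (y : ℝ) (hy : 0 < y)
    (heq : (1 - m₂) / (y ^ 2 + 1) ^ ((3 : ℝ) / 2) + m₂ / y ^ 3 = (1 + 7 * m₂) / 8) :
    1 ≤ y ∧ y ≤ Real.sqrt 3 := by
  constructor
  · by_contra! hy1
    exact (lt_mass_constraint_of_lt_one hm hy hy1).ne heq.symm
  · by_contra! hy3
    exact (mass_constraint_lt_of_sqrt_three_lt hm hy3).ne heq
end

section
/- Let n ≥ 2 be an integer, m > 0, m₀ ≥ 0, and set α = (n·m)^{−1/2} and ωⱼ = e^{−2π√−1·j/n} ∈ ℂ for j = 1, …, n. Define μ = ∑_{1 ≤ i < j ≤ n} m²/(α·|ωᵢ − ωⱼ|) + ∑_{i=1}^{n} m·m₀/(α·|ωᵢ|). Then μ·α³ = m₀ + (m/4)·∑_{j=1}^{n−1} 1/sin(jπ/n). -/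
/-! The vertices `ωⱼ` lie on the unit circle, so the central terms contribute `n·m·m₀/α`, and
the chord `|ωᵢ - ωⱼ|` for `i < j` is `2 sin((j - i)π/n)`. Grouping the pairs by the gap
`d = j - i`, which occurs `n - d` times, and pairing `d` with `n - d` (the chord lengths agree)
turns the weights `n - d` into their average `n/2`. Since `α² = 1/(nm)`, multiplying by `α³`
gives the identity. -/

open Finset Complex

section PairSums

variable {M : Type*} [AddCommMonoid M] (n : ℕ) (g : ℕ → M)

theorem sum_Icc_ite_lt_eq_sum_Icc (i : ℕ) :
    (∑ j ∈ Icc 1 n, if i < j then g (j - i) else 0) = ∑ d ∈ Icc 1 (n - i), g d := by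
  rw [← sum_filter]
  refine sum_nbij' (· - i) (· + i) ?_ ?_ ?_ ?_ ?_ <;> intro a ha <;> simp_all <;> omega

theorem sum_pairs_lt_eq_sum_nsmul :
    (∑ i ∈ Icc 1 n, ∑ j ∈ Icc 1 n, if i < j then g (j - i) else 0)
      = ∑ d ∈ Icc 1 (n - 1), (n - d) • g d := by
  simp_rw [sum_Icc_ite_lt_eq_sum_Icc]
  rw [sum_comm' (t' := Icc 1 (n - 1)) (s' := fun d => Icc 1 (n - d))]
  · simp [sum_const, Nat.card_Icc]
  · intro i d; simp only [mem_Icc]; omega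

theorem two_nsmul_sum_nsmul_of_reflect (hg : ∀ d ∈ Icc 1 (n - 1), g (n - d) = g d) :
    2 • ∑ d ∈ Icc 1 (n - 1), (n - d) • g d = n • ∑ d ∈ Icc 1 (n - 1), g d := by
  have reflect : ∑ d ∈ Icc 1 (n - 1), (n - d) • g d = ∑ d ∈ Icc 1 (n - 1), d • g d := by
    refine sum_nbij' (n - ·) (n - ·) ?_ ?_ ?_ ?_ fun d hd => ?_
    iterate 4 · intro d hd; simp only [mem_Icc] at hd ⊢; omega
    rw [hg d hd]
  rw [two_nsmul]
  nth_rw 2 [reflect]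
  rw [← sum_add_distrib, smul_sum]
  refine sum_congr rfl fun d hd => ?_
  rw [← add_nsmul, Nat.sub_add_cancel (by simp only [mem_Icc] at hd; omega)]

end PairSums

theorem Complex.norm_exp_ofReal_mul_I_sub_exp_ofReal_mul_I (a b : ℝ) :
    ‖exp (a * I) - exp (b * I)‖ = 2 * |Real.sin ((a - b) / 2)| := by
  have : exp (a * I) - exp (b * I) = exp (b * I) * (exp (I * ↑(a - b)) - 1) := by
    rw [mul_sub, ← exp_add]; push_cast; ring_nf
  rw [this, norm_mul, norm_exp_ofReal_mul_I, one_mul, norm_exp_I_mul_ofReal_sub_one, norm_mul,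
    Real.norm_eq_abs, Real.norm_eq_abs, abs_two]

noncomputable def polygonVertex (n j : ℕ) : ℂ := exp (-(2 * Real.pi * j / n) * I)

theorem polygonVertex_eq (n j : ℕ) :
    polygonVertex n j = exp (↑(-(2 * Real.pi * j / n)) * I) := by
  push_cast; rfl

theorem norm_polygonVertex (n j : ℕ) : ‖polygonVertex n j‖ = 1 := by
  rw [polygonVertex_eq, norm_exp_ofReal_mul_I]

theorem norm_polygonVertex_sub_polygonVertex {n i j : ℕ} (hij : i ≤ j) (hjn : j - i ≤ n) :
    ‖polygonVertex n i - polygonVertex n j‖ = 2 * Real.sin ((j - i : ℕ) * Real.pi / n) := by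
  rw [polygonVertex_eq, polygonVertex_eq, norm_exp_ofReal_mul_I_sub_exp_ofReal_mul_I]
  have hangle : (-(2 * Real.pi * i / n) - -(2 * Real.pi * j / n)) / 2
      = ((j - i : ℕ) : ℝ) * Real.pi / n := by
    rw [Nat.cast_sub hij]; ring
  have hangle_le : ((j - i : ℕ) : ℝ) * Real.pi / n ≤ Real.pi := by
    rw [mul_div_right_comm]
    exact mul_le_of_le_one_left Real.pi_pos.le
      (div_le_one_of_le₀ (by exact_mod_cast hjn) n.cast_nonneg)
  rw [hangle, abs_of_nonneg (Real.sin_nonneg_of_nonneg_of_le_pi (by positivity) hangle_le)]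

theorem Real.sin_natCast_sub_mul_pi_div {n d : ℕ} (hd : d ≤ n) :
    Real.sin ((n - d : ℕ) * Real.pi / n) = Real.sin (d * Real.pi / n) := by
  rcases Nat.eq_zero_or_pos n with rfl | hn
  · simp
  · rw [Nat.cast_sub hd, ← Real.sin_pi_sub]
    congr 1
    field_simp
    ring

theorem two_nsmul_sum_pairs_polygonVertex {M : Type*} [AddCommMonoid M] (n : ℕ) (f : ℝ → M) :
    2 • ∑ i ∈ Icc 1 n, ∑ j ∈ Icc 1 n,
        (if i < j then f ‖polygonVertex n i - polygonVertex n j‖ else 0)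
      = n • ∑ d ∈ Icc 1 (n - 1), f (2 * Real.sin (d * Real.pi / n)) := by
  set g : ℕ → M := fun d => f (2 * Real.sin (d * Real.pi / n))
  have hchord : ∑ i ∈ Icc 1 n, ∑ j ∈ Icc 1 n,
      (if i < j then f ‖polygonVertex n i - polygonVertex n j‖ else 0)
      = ∑ i ∈ Icc 1 n, ∑ j ∈ Icc 1 n, if i < j then g (j - i) else 0 := by
    refine sum_congr rfl fun i hi => sum_congr rfl fun j hj => ?_
    split_ifs with hij
    · rw [norm_polygonVertex_sub_polygonVertex hij.le (by simp only [mem_Icc] at hi hj; omega)]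
    · rfl
  have hreflect : ∀ d ∈ Icc 1 (n - 1), g (n - d) = g d := fun d hd => by
    simp only [g, Real.sin_natCast_sub_mul_pi_div (show d ≤ n by simp only [mem_Icc] at hd; omega)]
  rw [hchord, sum_pairs_lt_eq_sum_nsmul, two_nsmul_sum_nsmul_of_reflect n g hreflect]

theorem Real.rpow_neg_one_div_two_sq {x : ℝ} (hx : 0 ≤ x) : (x ^ (-(1 : ℝ) / 2)) ^ 2 = x⁻¹ := by
  rw [← Real.rpow_natCast, ← Real.rpow_mul hx]
  norm_num [Real.rpow_neg_one]

theorem statement13_general (n : ℕ) (hn : 2 ≤ n) (m m₀ : ℝ) (hm : 0 < m)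
    (α : ℝ) (hα : α = ((n : ℝ) * m) ^ (-(1 : ℝ) / 2))
    (ω : ℕ → ℂ)
    (hω : ∀ j, ω j = Complex.exp (-(2 * Real.pi * j / n) * Complex.I))
    (μ : ℝ)
    (hμ : μ = (∑ i ∈ Finset.Icc 1 n, ∑ j ∈ Finset.Icc 1 n,
        if i < j then m ^ 2 / (α * ‖ω i - ω j‖) else 0)
      + ∑ i ∈ Finset.Icc 1 n, m * m₀ / (α * ‖ω i‖)) :
    μ * α ^ 3 = m₀ + (m / 4) * ∑ j ∈ Finset.Icc 1 (n - 1),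
      1 / Real.sin (j * Real.pi / n) := by
  obtain rfl : ω = polygonVertex n := funext hω
  set P := ∑ i ∈ Icc 1 n, ∑ j ∈ Icc 1 n,
    if i < j then m ^ 2 / (α * ‖polygonVertex n i - polygonVertex n j‖) else 0
  set S := ∑ j ∈ Icc 1 (n - 1), 1 / Real.sin (j * Real.pi / n)
  have h_sum : ∑ d ∈ Icc 1 (n - 1), m ^ 2 / (α * (2 * Real.sin (d * Real.pi / n)))
      = m ^ 2 / (2 * α) * S := by
    rw [mul_sum]
    exact sum_congr rfl fun d _ => by ring
  have hα_pos : 0 < α := hα ▸ Real.rpow_pos_of_pos (by positivity) _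
  have hα_sq : α ^ 2 = (n * m)⁻¹ := hα ▸ Real.rpow_neg_one_div_two_sq (by positivity)
  have hP : P * α = n * m ^ 2 / 4 * S := by
    have := two_nsmul_sum_pairs_polygonVertex n fun r => m ^ 2 / (α * r)
    rw [h_sum, nsmul_eq_mul, nsmul_eq_mul, Nat.cast_ofNat] at this
    field_simp at this ⊢
    linarith
  calc μ * α ^ 3 = (P * α + n * (m * m₀ / α * α)) * α ^ 2 := by
        simp only [hμ, norm_polygonVertex, mul_one, sum_const, Nat.card_Icc, nsmul_eq_mul,
          Nat.add_sub_cancel]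
        ring
    _ = (n * m) * α ^ 2 * (m₀ + m / 4 * S) := by rw [hP, div_mul_cancel₀ _ hα_pos.ne']; ring
    _ = m₀ + m / 4 * S := by
        rw [hα_sq, mul_inv_cancel₀ (by positivity), one_mul]

/-- for the `(1+n)`-gon configuration (n equal masses `m` at the vertices
`α·ωⱼ` of a regular n-gon and a mass `m₀` at the center, with `α = (nm)^{−1/2}`), the
Newtonian potential `μ = ∑_{1≤i<j≤n} m²/(α|ωᵢ − ωⱼ|) + ∑ᵢ m·m₀/(α|ωᵢ|)` satisfies
`μ·α³ = m₀ + (m/4)·∑_{j=1}^{n−1} 1/sin(jπ/n)`. -/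
theorem statement13 (n : ℕ) (hn : 2 ≤ n) (m m₀ : ℝ) (hm : 0 < m) (hm₀ : 0 ≤ m₀)
    (α : ℝ) (hα : α = ((n : ℝ) * m) ^ (-(1 : ℝ) / 2))
    (ω : ℕ → ℂ)
    (hω : ∀ j, ω j = Complex.exp (-(2 * Real.pi * j / n) * Complex.I))
    (μ : ℝ)
    (hμ : μ = (∑ i ∈ Finset.Icc 1 n, ∑ j ∈ Finset.Icc 1 n,
        if i < j then m ^ 2 / (α * ‖ω i - ω j‖) else 0)
      + ∑ i ∈ Finset.Icc 1 n, m * m₀ / (α * ‖ω i‖)) :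
    μ * α ^ 3 = m₀ + (m / 4) * ∑ j ∈ Finset.Icc 1 (n - 1),
      1 / Real.sin (j * Real.pi / n) :=
  statement13_general n hn m m₀ hm α hα ω hω μ hμ
end

section
/- Let n ≥ 2 be an integer. For s ∈ (0, 1) define h_n(s) = (1/n)·∑_{j=1}^{n} (1 − s·cos(2jπ/n))/(1 + s² − 2s·cos(2jπ/n))^{3/2}, g_n(s) = (1/n)·∑_{j=1}^{n} (1 − s⁴·cos(2jπ/n))/(1 + s² − 2s·cos(2jπ/n))^{3/2}, and set h_n(1) = (1/(4n))·∑_{j=1}^{n−1} 1/sin(jπ/n). Then the limit as s → 1 from the left of (g_n(s) − h_n(1))/(h_n(s) − h_n(1)) exists and equals 4. -/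
/-!
Multiply everything by `(1 - s)²`. The term `j = n` has `cos (2jπ/n) = 1`, so its denominator is
`(1 - s)³` and it contributes `(1 - s^k)/(1 - s) → k`, with `k = 1` for `h` and `k = 4` for `g`.
Every other term, and the constant `h_n(1)`, stays bounded near `s = 1` and is killed by `(1 - s)²`.
Hence `(1 - s)² (g - h_n(1)) → 4/n` and `(1 - s)² (h - h_n(1)) → 1/n`.
-/

open Filter Topology Finset Real

lemma sq_rpow_three_halves {t : ℝ} (ht : 0 ≤ t) : (t ^ 2) ^ ((3 : ℝ) / 2) = t ^ 3 := by
  rw [← Real.rpow_natCast t 2, ← Real.rpow_mul ht, ← Real.rpow_natCast t 3]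
  norm_num

lemma tendsto_one_sub_pow_div_one_sub (k : ℕ) :
    Tendsto (fun s : ℝ => (1 - s ^ k) / (1 - s)) (𝓝[<] 1) (𝓝 (k : ℝ)) := by
  have hgeom : ∀ s ∈ Set.Iio (1 : ℝ), ∑ i ∈ range k, s ^ i = (1 - s ^ k) / (1 - s) := by
    intro s hs
    rw [geom_sum_eq (ne_of_lt hs), ← neg_sub, ← neg_sub 1 s, neg_div_neg_eq]
  have hcont : Tendsto (fun s : ℝ => ∑ i ∈ range k, s ^ i) (𝓝 1) (𝓝 k) := by
    simpa using ((continuous_finsetSum (range k) fun i _ => continuous_pow (M := ℝ) i).tendsto 1)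
  exact (hcont.mono_left nhdsWithin_le_nhds).congr' (eventuallyEq_of_mem self_mem_nhdsWithin hgeom)

lemma one_sub_sq_mul_singular_term {s : ℝ} (hs : s < 1) (k : ℕ) :
    (1 - s) ^ 2 * ((1 - s ^ k * 1) / (1 + s ^ 2 - 2 * s * 1) ^ ((3 : ℝ) / 2)) =
      (1 - s ^ k) / (1 - s) := by
  have hs' : 0 < 1 - s := sub_pos.mpr hs
  rw [show 1 + s ^ 2 - 2 * s * 1 = (1 - s) ^ 2 by ring, sq_rpow_three_halves hs'.le, mul_one]
  field_simp

lemma tendsto_one_sub_sq_mul_regular_term {c : ℝ} (hc : c < 1) (k : ℕ) :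
    Tendsto (fun s : ℝ => (1 - s) ^ 2 * ((1 - s ^ k * c) / (1 + s ^ 2 - 2 * s * c) ^ ((3 : ℝ) / 2)))
      (𝓝 1) (𝓝 0) := by
  have hden : 0 < 1 + 1 ^ 2 - 2 * 1 * c := by linarith
  have hcont : ContinuousAt (fun s : ℝ =>
      (1 - s) ^ 2 * ((1 - s ^ k * c) / (1 + s ^ 2 - 2 * s * c) ^ ((3 : ℝ) / 2))) 1 := by
    refine ContinuousAt.mul (by fun_prop) (ContinuousAt.div (by fun_prop) ?_ ?_)
    · exact ContinuousAt.rpow_const (by fun_prop) (Or.inl hden.ne')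
    · exact (Real.rpow_pos_of_pos hden _).ne'
  simpa using hcont.tendsto

lemma tendsto_one_sub_sq_mul_sum {ι : Type*} [DecidableEq ι] {J : Finset ι} {c : ι → ℝ} {j₀ : ι} (hj₀ : j₀ ∈ J)
    (hc₀ : c j₀ = 1) (hc : ∀ j ∈ J, j ≠ j₀ → c j < 1) (k : ℕ) :
    Tendsto (fun s : ℝ => (1 - s) ^ 2 *
        ∑ j ∈ J, (1 - s ^ k * c j) / (1 + s ^ 2 - 2 * s * c j) ^ ((3 : ℝ) / 2))
      (𝓝[<] 1) (𝓝 (k : ℝ)) := by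
  have hsingular : Tendsto (fun s : ℝ => (1 - s) ^ 2 *
      ((1 - s ^ k * c j₀) / (1 + s ^ 2 - 2 * s * c j₀) ^ ((3 : ℝ) / 2))) (𝓝[<] 1) (𝓝 (k : ℝ)) := by
    rw [hc₀]
    exact (tendsto_one_sub_pow_div_one_sub k).congr' (eventuallyEq_of_mem self_mem_nhdsWithin
      fun s hs => (one_sub_sq_mul_singular_term hs k).symm)
  have hrest : Tendsto (fun s : ℝ => ∑ j ∈ J.erase j₀, (1 - s) ^ 2 *
      ((1 - s ^ k * c j) / (1 + s ^ 2 - 2 * s * c j) ^ ((3 : ℝ) / 2))) (𝓝 1) (𝓝 0) := by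
    simpa using tendsto_finsetSum (J.erase j₀) fun j hj =>
      tendsto_one_sub_sq_mul_regular_term (hc j (mem_of_mem_erase hj) (ne_of_mem_erase hj)) k
  have hlim := hsingular.add (hrest.mono_left nhdsWithin_le_nhds)
  rw [add_zero] at hlim
  refine hlim.congr fun s => ?_
  rw [mul_sum, ← add_sum_erase J _ hj₀]

lemma cos_two_mul_nat_mul_pi_div_lt_one {j n : ℕ} (hj : 0 < j) (hjn : j < n) :
    cos (2 * j * π / n) < 1 := by
  have hn : (0 : ℝ) < n := by exact_mod_cast hj.trans hjn
  have hpos : 0 < 2 * j * π / n := by positivity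
  have hlt : 2 * j * π / n < 2 * π := by
    rw [div_lt_iff₀ hn]
    nlinarith [pi_pos, (by exact_mod_cast hjn : (j : ℝ) < n)]
  refine lt_of_le_of_ne (cos_le_one _) fun h => hpos.ne' ?_
  exact (cos_eq_one_iff_of_lt_of_lt (by linarith) hlt).mp h

lemma tendsto_div_of_tendsto_mul_left {α 𝕜 : Type*} [NormedField 𝕜] {u v w : α → 𝕜}
    {l : Filter α} {a b : 𝕜}
    (hu : Tendsto (fun s => w s * u s) l (𝓝 a)) (hv : Tendsto (fun s => w s * v s) l (𝓝 b))
    (hb : b ≠ 0) (hw : ∀ᶠ s in l, w s ≠ 0) :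
    Tendsto (fun s => u s / v s) l (𝓝 (a / b)) :=
  (hu.div hv hb).congr' (hw.mono fun _ hs => mul_div_mul_left _ _ hs)

theorem statement17_general (n : ℕ) (hn : 2 ≤ n)
    (h g : ℝ → ℝ)
    (hh : h = fun s => (1 / (n : ℝ)) * ∑ j ∈ Finset.Icc 1 n,
        (1 - s * Real.cos (2 * j * Real.pi / n)) /
          (1 + s ^ 2 - 2 * s * Real.cos (2 * j * Real.pi / n)) ^ ((3 : ℝ) / 2))
    (hg : g = fun s => (1 / (n : ℝ)) * ∑ j ∈ Finset.Icc 1 n,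
        (1 - s ^ 4 * Real.cos (2 * j * Real.pi / n)) /
          (1 + s ^ 2 - 2 * s * Real.cos (2 * j * Real.pi / n)) ^ ((3 : ℝ) / 2))
    (h1 : ℝ) :
    Filter.Tendsto (fun s => (g s - h1) / (h s - h1))
      (nhdsWithin 1 (Set.Iio 1)) (nhds 4) := by
  have hn0 : (n : ℝ) ≠ 0 := Nat.cast_ne_zero.mpr (by omega)
  have hcos_n : cos (2 * (n : ℝ) * π / n) = 1 := by
    rw [show 2 * (n : ℝ) * π / n = 2 * π by field_simp, cos_two_pi]
  have hcos_lt : ∀ j ∈ Icc 1 n, j ≠ n → cos (2 * (j : ℝ) * π / n) < 1 := fun j hj hjn =>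
    cos_two_mul_nat_mul_pi_div_lt_one (mem_Icc.mp hj).1 (lt_of_le_of_ne (mem_Icc.mp hj).2 hjn)
  have hsum (k : ℕ) := tendsto_one_sub_sq_mul_sum (J := Icc 1 n) (by simp; omega) hcos_n hcos_lt k
  have hconst : Tendsto (fun s : ℝ => (1 - s) ^ 2 * h1) (𝓝[<] 1) (𝓝 0) := by
    simpa using ((by fun_prop : Continuous fun s : ℝ => (1 - s) ^ 2 * h1).tendsto 1).mono_left
      nhdsWithin_le_nhds
  have hH : Tendsto (fun s => (1 - s) ^ 2 * (h s - h1)) (𝓝[<] 1) (𝓝 (1 / (n : ℝ))) := by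
    convert ((hsum 1).const_mul (1 / (n : ℝ))).sub hconst using 2
    · simp only [hh, pow_one]; ring
    · simp
  have hG : Tendsto (fun s => (1 - s) ^ 2 * (g s - h1)) (𝓝[<] 1) (𝓝 (4 * (1 / (n : ℝ)))) := by
    convert ((hsum 4).const_mul (1 / (n : ℝ))).sub hconst using 2
    · simp only [hg]; ring
    · push_cast; ring
  have hw : ∀ᶠ s : ℝ in 𝓝[<] 1, (1 - s) ^ 2 ≠ 0 :=
    eventually_mem_nhdsWithin.mono fun _ hs => pow_ne_zero 2 (sub_pos.mpr hs).ne'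
  simpa [hn0] using tendsto_div_of_tendsto_mul_left hG hH (by simpa using hn0) hw

/-- with
`h_n(s) = (1/n)∑_{j=1}^{n} (1 − s·cos(2jπ/n))/(1 + s² − 2s·cos(2jπ/n))^{3/2}`,
`g_n(s) = (1/n)∑_{j=1}^{n} (1 − s⁴·cos(2jπ/n))/(1 + s² − 2s·cos(2jπ/n))^{3/2}` and
`h_n(1) = (1/(4n))∑_{j=1}^{n−1} 1/sin(jπ/n)`, the limit of
`(g_n(s) − h_n(1))/(h_n(s) − h_n(1))` as `s → 1⁻` exists and equals `4`. -/
theorem statement17 (n : ℕ) (hn : 2 ≤ n)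
    (h g : ℝ → ℝ)
    (hh : h = fun s => (1 / (n : ℝ)) * ∑ j ∈ Finset.Icc 1 n,
        (1 - s * Real.cos (2 * j * Real.pi / n)) /
          (1 + s ^ 2 - 2 * s * Real.cos (2 * j * Real.pi / n)) ^ ((3 : ℝ) / 2))
    (hg : g = fun s => (1 / (n : ℝ)) * ∑ j ∈ Finset.Icc 1 n,
        (1 - s ^ 4 * Real.cos (2 * j * Real.pi / n)) /
          (1 + s ^ 2 - 2 * s * Real.cos (2 * j * Real.pi / n)) ^ ((3 : ℝ) / 2))
    (h1 : ℝ)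
    (hh1 : h1 = (1 / (4 * (n : ℝ))) * ∑ j ∈ Finset.Icc 1 (n - 1),
        1 / Real.sin (j * Real.pi / n)) :
    Filter.Tendsto (fun s => (g s - h1) / (h s - h1))
      (nhdsWithin 1 (Set.Iio 1)) (nhds 4) :=
  statement17_general n hn h g hh hg h1
end

section
/- Let n ≥ 2 be an integer and set αⱼ = (2j + 1)π/n for j = 1, …, n. Then cos αⱼ ≠ 1 for every j, and (1/(2n))·∑_{j=1}^{n} (2 − 2cos αⱼ)^{−3/2} + (1/n)·∑_{j=1}^{n} (1 − cos αⱼ)·(2 − 2cos αⱼ)^{−3/2} − (3/(2n))·∑_{j=1}^{n} (1 + cos 2αⱼ − 2cos αⱼ)·(2 − 2cos αⱼ)^{−5/2} > 0. -/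
/-!
Since `1 + cos 2α − 2 cos α = −cos α · (2 − 2 cos α)`, the `j`-th terms of the three sums combine
into `(3 + cos αⱼ) (2 − 2 cos αⱼ)^{−3/2} / (2n)`, which is positive because `cos αⱼ ≠ 1`.
The latter holds as `αⱼ` is an odd multiple of `π/n`, never an even multiple of `π`.
-/

open Real

lemma cos_odd_mul_pi_div_ne_one (n j : ℕ) (hn : n ≠ 0) :
    cos ((2 * j + 1) * π / n) ≠ 1 := by
  rw [Ne, cos_eq_one_iff]
  rintro ⟨k, hk⟩
  have hn' : (n : ℝ) ≠ 0 := Nat.cast_ne_zero.mpr hn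
  field_simp at hk
  have hint : k * 2 * n = 2 * (j : ℤ) + 1 := by exact_mod_cast hk
  have heven : (2 : ℤ) ∣ 2 * j + 1 := hint ▸ ⟨k * n, by ring⟩
  omega

lemma rpow_neg_five_halves_eq {x : ℝ} (hx : 0 < x) :
    x ^ (-(5 : ℝ) / 2) = x ^ (-(3 : ℝ) / 2) * x⁻¹ := by
  rw [← rpow_neg_one x, ← rpow_add hx]
  norm_num

lemma summand_combine (n θ : ℝ) (hθ : cos θ < 1) :
    1 / (2 * n) * (2 - 2 * cos θ) ^ (-(3 : ℝ) / 2)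
      + 1 / n * ((1 - cos θ) * (2 - 2 * cos θ) ^ (-(3 : ℝ) / 2))
      - 3 / (2 * n) * ((1 + cos (2 * θ) - 2 * cos θ) * (2 - 2 * cos θ) ^ (-(5 : ℝ) / 2))
      = (3 + cos θ) / (2 * n) * (2 - 2 * cos θ) ^ (-(3 : ℝ) / 2) := by
  have hd : 0 < 2 - 2 * cos θ := by linarith
  have hfactor : 1 + cos (2 * θ) - 2 * cos θ = -cos θ * (2 - 2 * cos θ) := by
    rw [cos_two_mul]; ring
  have hcancel : -cos θ * (2 - 2 * cos θ) * ((2 - 2 * cos θ) ^ (-(3 : ℝ) / 2) * (2 - 2 * cos θ)⁻¹)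
      = -cos θ * (2 - 2 * cos θ) ^ (-(3 : ℝ) / 2) := by
    rw [mul_assoc, mul_left_comm (2 - 2 * cos θ), mul_inv_cancel₀ hd.ne', mul_one]
  rw [rpow_neg_five_halves_eq hd, hfactor, hcancel]
  ring

lemma summand_pos {n θ : ℝ} (hn : 0 < n) (hθ : cos θ < 1) :
    0 < 1 / (2 * n) * (2 - 2 * cos θ) ^ (-(3 : ℝ) / 2)
      + 1 / n * ((1 - cos θ) * (2 - 2 * cos θ) ^ (-(3 : ℝ) / 2))
      - 3 / (2 * n) * ((1 + cos (2 * θ) - 2 * cos θ) * (2 - 2 * cos θ) ^ (-(5 : ℝ) / 2)) := by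
  rw [summand_combine n θ hθ]
  have hc : 0 < 3 + cos θ := by linarith [neg_one_le_cos θ]
  have hd : 0 < 2 - 2 * cos θ := by linarith
  exact mul_pos (div_pos hc (by positivity)) (rpow_pos_of_pos hd _)

/-- for `n ≥ 2` and `αⱼ = (2j + 1)π/n`, `cos αⱼ ≠ 1` for every
`j = 1, …, n`, and
`(1/(2n))∑ (2 − 2cos αⱼ)^{−3/2} + (1/n)∑ (1 − cos αⱼ)(2 − 2cos αⱼ)^{−3/2}
  − (3/(2n))∑ (1 + cos 2αⱼ − 2cos αⱼ)(2 − 2cos αⱼ)^{−5/2} > 0`. -/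
theorem statement19 (n : ℕ) (hn : 2 ≤ n) (α : ℕ → ℝ)
    (hα : ∀ j, α j = (2 * j + 1) * Real.pi / n) :
    (∀ j ∈ Finset.Icc 1 n, Real.cos (α j) ≠ 1) ∧
      0 < (1 / (2 * (n : ℝ))) * ∑ j ∈ Finset.Icc 1 n,
            (2 - 2 * Real.cos (α j)) ^ (-(3 : ℝ) / 2)
          + (1 / (n : ℝ)) * ∑ j ∈ Finset.Icc 1 n,
            (1 - Real.cos (α j)) * (2 - 2 * Real.cos (α j)) ^ (-(3 : ℝ) / 2)
          - (3 / (2 * (n : ℝ))) * ∑ j ∈ Finset.Icc 1 n,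
            (1 + Real.cos (2 * α j) - 2 * Real.cos (α j)) *
              (2 - 2 * Real.cos (α j)) ^ (-(5 : ℝ) / 2) := by
  have hn0 : n ≠ 0 := by omega
  have hcos_ne : ∀ j, cos (α j) ≠ 1 := fun j => hα j ▸ cos_odd_mul_pi_div_ne_one n j hn0
  refine ⟨fun j _ => hcos_ne j, ?_⟩
  rw [Finset.mul_sum, Finset.mul_sum, Finset.mul_sum, ← Finset.sum_add_distrib,
    ← Finset.sum_sub_distrib]
  refine Finset.sum_pos (fun j _ => ?_) (Finset.nonempty_Icc.mpr (by omega))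
  exact summand_pos (by positivity) (lt_of_le_of_ne (cos_le_one _) (hcos_ne j))
end
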